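/- Let τ be a normalized weight function satisfying (ω₃) and (ω₄) with γ(τ) > 0. Let T^x_p := exp((1/x)φ*_τ(xp)) and T̂^x_p := p!·T^x_p for x>0, p∈ℕ. Then for all x,y > 0 the associated function ω_{T̂^x} and the lower Legendre conjugate (ω_{T^y}^ι)_⋆ of t ↦ ω_{T^y}(1/t) are equivalent weight functions; in particular all the functions ω_{T̂^x}, x>0, are mutually equivalent. -/

import Mathlib

open Filter MeasureTheory Set Asymptotics Topology

noncomputable section

/-- A weight function: continuous and nondecreasing on `[0,∞)`, vanishing at `0`,
and tending to `∞` at `∞`. -/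
def IsWeightFun (ω : ℝ → ℝ) : Prop :=
  ContinuousOn ω (Ici 0) ∧ MonotoneOn ω (Ici 0) ∧ ω 0 = 0 ∧ Tendsto ω atTop atTop

/-- A weight function is normalized if it vanishes on `[0,1]`. -/
def IsNormalized (ω : ℝ → ℝ) : Prop :=
  ∀ t ∈ Icc (0 : ℝ) 1, ω t = 0

/-- Property `(P_{ω,γ})`: there is `K > 1` with `limsup_{t→∞} ω(K^γ t)/ω(t) < K`. -/
def PropGamma (ω : ℝ → ℝ) (γ : ℝ) : Prop :=
  ∃ K : ℝ, 1 < K ∧ limsup (fun t : ℝ => ω (K ^ γ * t) / ω t) atTop < K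

/-- The growth index `γ(ω)`, valued in `ℝ≥0∞`; it equals `0` when no `γ > 0`
satisfies `(P_{ω,γ})` (as `sSup ∅ = 0` in `ℝ≥0∞`). -/
def gammaIndex (ω : ℝ → ℝ) : ENNReal :=
  sSup (ENNReal.ofReal '' {γ : ℝ | 0 < γ ∧ PropGamma ω γ})

/-- The Legendre-Fenchel-Young conjugate `φ*_τ(x) = sup_{y ≥ 0} (x y - τ(e^y))`. -/
def legConj (τ : ℝ → ℝ) (x : ℝ) : ℝ :=
  sSup ((fun y => x * y - τ (Real.exp y)) '' Ici 0)

/-- The weight matrix associated with `τ`: `T^x_p = exp((1/x) φ*_τ(x p))`. -/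
def Tmat (τ : ℝ → ℝ) (x : ℝ) (p : ℕ) : ℝ :=
  Real.exp ((1 / x) * legConj τ (x * p))

/-- The sequence `T̂^x_p = p! T^x_p`. -/
def ThatSeq (τ : ℝ → ℝ) (x : ℝ) (p : ℕ) : ℝ :=
  (Nat.factorial p : ℝ) * Tmat τ x p

/-- The associated function `ω_M(t) = sup_{p ∈ ℕ} log (t^p / M_p)` for `t > 0`,
extended by `0` at `t = 0` (and on the irrelevant negative half-line). -/
def assocFun (M : ℕ → ℝ) (t : ℝ) : ℝ :=
  if t ≤ 0 then 0 else sSup (Set.range fun p : ℕ => Real.log (t ^ p / M p))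

/-- The lower Legendre conjugate `h_⋆(t) = inf_{s > 0} (h(s) + t s)`. -/
def lowerLeg (h : ℝ → ℝ) (t : ℝ) : ℝ :=
  sInf ((fun s => h s + t * s) '' Ioi 0)

section helpers

variable {τ : ℝ → ℝ}

/-- φ -/
def phiF (τ : ℝ → ℝ) (w : ℝ) : ℝ := τ (Real.exp w)

lemma phiF_nonneg (hτ : IsWeightFun τ) (w : ℝ) : 0 ≤ phiF τ w := by
  have := hτ.2.1 (mem_Ici.2 le_rfl) (mem_Ici.2 (Real.exp_pos w).le) (Real.exp_pos w).le
  rw [hτ.2.2.1] at this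
  exact this

lemma phiF_mono (hτ : IsWeightFun τ) : Monotone (phiF τ) := fun a b hab =>
  hτ.2.1 (mem_Ici.2 (Real.exp_pos a).le) (mem_Ici.2 (Real.exp_pos b).le)
    (Real.exp_le_exp.2 hab)

lemma phiF_zero (hn : IsNormalized τ) {w : ℝ} (hw : w ≤ 0) : phiF τ w = 0 :=
  hn _ ⟨(Real.exp_pos w).le, Real.exp_le_one_iff.2 hw⟩

lemma phiF_cont (hτ : IsWeightFun τ) : Continuous (phiF τ) :=
  hτ.1.comp_continuous Real.continuous_exp fun w => (Real.exp_pos w).le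

lemma slope4 (h4 : ConvexOn ℝ univ (phiF τ)) {a b c d : ℝ} (hab : a < b) (hcd : c < d)
    (hac : a ≤ c) (hbd : b ≤ d) :
    (phiF τ b - phiF τ a) / (b - a) ≤ (phiF τ d - phiF τ c) / (d - c) := by
  have had : a < d := lt_of_lt_of_le hab hbd
  have h1 : (phiF τ b - phiF τ a) / (b - a) ≤ (phiF τ d - phiF τ a) / (d - a) :=
    h4.secant_mono (mem_univ a) (mem_univ b) (mem_univ d) hab.ne' had.ne' hbd
  have h2 : (phiF τ a - phiF τ d) / (a - d) ≤ (phiF τ c - phiF τ d) / (c - d) :=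
    h4.secant_mono (mem_univ d) (mem_univ a) (mem_univ c) had.ne hcd.ne hac
  have e1 : (phiF τ a - phiF τ d) / (a - d) = (phiF τ d - phiF τ a) / (d - a) := by
    rw [← neg_div_neg_eq]; ring_nf
  have e2 : (phiF τ c - phiF τ d) / (c - d) = (phiF τ d - phiF τ c) / (d - c) := by
    rw [← neg_div_neg_eq]; ring_nf
  rw [e1, e2] at h2
  exact h1.trans h2

/-- gap function -/
def gapF (τ : ℝ → ℝ) (w : ℝ) : ℝ := phiF τ (w + 1) - phiF τ w

lemma C1 (h4 : ConvexOn ℝ univ (phiF τ)) {y v : ℝ} (hyv : y ≤ v) :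
    phiF τ v - phiF τ y ≤ gapF τ v * (v - y) := by
  rcases eq_or_lt_of_le hyv with rfl | h
  · simp [gapF]
  · have := slope4 h4 h (show v < v + 1 by linarith) hyv (by linarith)
    rw [div_le_div_iff₀ (by linarith) (by linarith)] at this
    have e : v + 1 - v = 1 := by ring
    rw [e, mul_one] at this
    calc phiF τ v - phiF τ y ≤ (phiF τ (v+1) - phiF τ v) * (v - y) := this
    _ = gapF τ v * (v - y) := rfl

lemma C2 (h4 : ConvexOn ℝ univ (phiF τ)) {v y : ℝ} (hy : v + 2 ≤ y) :
    gapF τ (v + 1) * (y - (v + 2)) ≤ phiF τ y - phiF τ (v + 2) := by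
  rcases eq_or_lt_of_le hy with rfl | h
  · simp [gapF]
  · have := slope4 h4 (show v + 1 < v + 2 by linarith) h (by linarith) hy
    rw [div_le_div_iff₀ (by linarith) (by linarith)] at this
    have e : v + 2 - (v + 1) = 1 := by ring
    rw [e] at this
    have : gapF τ (v+1) * (y - (v+2)) ≤ (phiF τ y - phiF τ (v + 2)) * 1 := by
      calc gapF τ (v+1) * (y - (v+2)) = (phiF τ (v+2) - phiF τ (v+1)) * (y - (v+2)) := by
            unfold gapF; ring_nf
      _ ≤ (phiF τ y - phiF τ (v + 2)) * 1 := this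
    linarith
  
lemma gapF_mono (h4 : ConvexOn ℝ univ (phiF τ)) : Monotone (gapF τ) := by
  intro a b hab
  rcases eq_or_lt_of_le hab with rfl | h
  · exact le_refl _
  · have := slope4 h4 (show a < a + 1 by linarith) (show b < b + 1 by linarith)
      hab (by linarith)
    simp only [add_sub_cancel_left, div_one] at this
    exact this

lemma gapF_nonneg (hτ : IsWeightFun τ) (w : ℝ) : 0 ≤ gapF τ w :=
  sub_nonneg.2 (phiF_mono hτ (by linarith))


lemma tau_nonneg (hτ : IsWeightFun τ) {t : ℝ} (ht : 0 ≤ t) : 0 ≤ τ t := by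
  have := hτ.2.1 (mem_Ici.2 le_rfl) (mem_Ici.2 ht) ht
  rwa [hτ.2.2.1] at this

lemma tau_one (hn : IsNormalized τ) : τ 1 = 0 := hn 1 ⟨zero_le_one, le_rfl⟩

lemma phiF_superlin (hτ : IsWeightFun τ) (h3 : (fun t => Real.log t) =o[atTop] τ) (c : ℝ) :
    ∀ᶠ w in atTop, c * w ≤ phiF τ w := by
  rcases le_or_gt c 0 with hc | hc
  · filter_upwards [eventually_ge_atTop (0:ℝ)] with w hw
    exact (mul_nonpos_of_nonpos_of_nonneg hc hw).trans (phiF_nonneg hτ w)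
  · have hb := h3.def (show (0:ℝ) < 1/c by positivity)
    have hev : ∀ᶠ t in atTop, c * Real.log t ≤ τ t := by
      filter_upwards [hb, eventually_ge_atTop (1:ℝ)] with t hbt ht1
      rw [Real.norm_eq_abs, Real.norm_eq_abs, abs_of_nonneg (Real.log_nonneg ht1),
        abs_of_nonneg (tau_nonneg hτ (by linarith))] at hbt
      calc c * Real.log t ≤ c * (1/c * τ t) := mul_le_mul_of_nonneg_left hbt hc.le
      _ = τ t := by field_simp
    filter_upwards [Real.tendsto_exp_atTop.eventually hev] with w hw
    simpa [phiF, Real.log_exp] using hw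

lemma gapF_tendsto (hτ : IsWeightFun τ) (hn : IsNormalized τ)
    (h3 : (fun t => Real.log t) =o[atTop] τ) (h4 : ConvexOn ℝ univ (phiF τ)) :
    Tendsto (gapF τ) atTop atTop := by
  rw [tendsto_atTop]
  intro b
  filter_upwards [phiF_superlin hτ h3 (max b 1), eventually_ge_atTop (1:ℝ)] with w hw hw1
  have h0 : phiF τ 0 = 0 := phiF_zero hn le_rfl
  have hc := C1 h4 (show (0:ℝ) ≤ w by linarith)
  rw [h0, sub_zero, sub_zero] at hc
  have hgw : max b 1 * w ≤ gapF τ w * w := le_trans hw hc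
  have : max b 1 ≤ gapF τ w :=
    le_of_mul_le_mul_right (by linarith) (by linarith : (0:ℝ) < w)
  exact le_trans (le_max_left _ _) this

def Wset (τ : ℝ → ℝ) (σ : ℝ) : Set ℝ := {w | 0 ≤ w ∧ gapF τ w ≤ σ}

def WF (τ : ℝ → ℝ) (σ : ℝ) : ℝ := sSup (Wset τ σ)

lemma gapF_cont (hτ : IsWeightFun τ) : Continuous (gapF τ) :=
  ((phiF_cont hτ).comp (continuous_id.add continuous_const)).sub (phiF_cont hτ)

lemma Wset_bddAbove (hτ : IsWeightFun τ) (hn : IsNormalized τ)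
    (h3 : (fun t => Real.log t) =o[atTop] τ) (h4 : ConvexOn ℝ univ (phiF τ)) (σ : ℝ) :
    BddAbove (Wset τ σ) := by
  obtain ⟨w₂, hw₂⟩ := eventually_atTop.1 ((gapF_tendsto hτ hn h3 h4).eventually_ge_atTop (σ + 1))
  refine ⟨w₂, fun w hw => ?_⟩
  by_contra hle
  push_neg at hle
  have := hw₂ w hle.le
  have := hw.2
  linarith

lemma WF_mem (hτ : IsWeightFun τ) (hn : IsNormalized τ)
    (h3 : (fun t => Real.log t) =o[atTop] τ) (h4 : ConvexOn ℝ univ (phiF τ))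
    {σ : ℝ} (hσ : gapF τ 0 ≤ σ) : WF τ σ ∈ Wset τ σ := by
  have hcl : IsClosed (Wset τ σ) := by
    have : Wset τ σ = Ici 0 ∩ gapF τ ⁻¹' Iic σ := by
      ext w; simp [Wset]
    rw [this]
    exact isClosed_Ici.inter (isClosed_Iic.preimage (gapF_cont hτ))
  exact hcl.csSup_mem ⟨0, le_rfl, hσ⟩ (Wset_bddAbove hτ hn h3 h4 σ)

lemma WF_lt (hτ : IsWeightFun τ) (hn : IsNormalized τ)
    (h3 : (fun t => Real.log t) =o[atTop] τ) (h4 : ConvexOn ℝ univ (phiF τ))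
    {σ w : ℝ} (hσ : gapF τ 0 ≤ σ) (h : WF τ σ < w) : σ < gapF τ w := by
  by_contra hle
  push_neg at hle
  have hw0 : 0 ≤ w := le_trans (WF_mem hτ hn h3 h4 hσ).1 h.le
  have : w ≤ WF τ σ := le_csSup (Wset_bddAbove hτ hn h3 h4 σ) ⟨hw0, hle⟩
  linarith

lemma legConj_bddAbove (hτ : IsWeightFun τ) (h3 : (fun t => Real.log t) =o[atTop] τ)
    {σ : ℝ} (hσ : 0 ≤ σ) :
    BddAbove ((fun y => σ * y - τ (Real.exp y)) '' Ici 0) := by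
  obtain ⟨w₁, hw₁⟩ := eventually_atTop.1 (phiF_superlin hτ h3 (σ + 1))
  refine ⟨σ * max w₁ 0, ?_⟩
  rintro z ⟨y, hy, rfl⟩
  have hmax : (0:ℝ) ≤ max w₁ 0 := le_max_right _ _
  have hσm : 0 ≤ σ * max w₁ 0 := mul_nonneg hσ hmax
  rcases le_or_gt y (max w₁ 0) with h | h
  · have h1 : (0:ℝ) ≤ τ (Real.exp y) := phiF_nonneg hτ y
    have h2 : σ * y ≤ σ * max w₁ 0 := mul_le_mul_of_nonneg_left h hσ
    simp only
    linarith
  · have hyw : w₁ ≤ y := le_trans (le_max_left _ _) h.le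
    have h1 : (σ + 1) * y ≤ phiF τ y := hw₁ y hyw
    have hy0 : (0:ℝ) ≤ y := le_trans hmax h.le
    simp only [phiF] at h1 ⊢
    nlinarith

lemma legConj_ge (hτ : IsWeightFun τ) (h3 : (fun t => Real.log t) =o[atTop] τ)
    {σ u : ℝ} (hσ : 0 ≤ σ) (hu : 0 ≤ u) :
    σ * u - τ (Real.exp u) ≤ legConj τ σ :=
  le_csSup (legConj_bddAbove hτ h3 hσ) ⟨u, hu, rfl⟩

lemma legConj_nonneg (hτ : IsWeightFun τ) (hn : IsNormalized τ)
    (h3 : (fun t => Real.log t) =o[atTop] τ) {σ : ℝ} (hσ : 0 ≤ σ) : 0 ≤ legConj τ σ := by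
  have h := legConj_ge hτ h3 hσ (le_refl (0:ℝ))
  rw [Real.exp_zero, tau_one hn] at h
  simpa using h

lemma legConj_le {σ B : ℝ} (hB : ∀ y, 0 ≤ y → σ * y - τ (Real.exp y) ≤ B) :
    legConj τ σ ≤ B := by
  refine csSup_le ⟨(fun y => σ * y - τ (Real.exp y)) 0, ⟨0, mem_Ici.2 le_rfl, rfl⟩⟩ ?_
  rintro z ⟨y, hy, rfl⟩
  exact hB y hy

lemma legConj_mono (hτ : IsWeightFun τ) (h3 : (fun t => Real.log t) =o[atTop] τ)
    {σ σ' : ℝ} (hσ : 0 ≤ σ) (h : σ ≤ σ') : legConj τ σ ≤ legConj τ σ' := by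
  apply legConj_le
  intro y hy
  have h1 : σ * y ≤ σ' * y := mul_le_mul_of_nonneg_right h hy
  have h2 := legConj_ge hτ h3 (hσ.trans h) hy
  linarith

lemma legConj_zero (hτ : IsWeightFun τ) (hn : IsNormalized τ)
    (h3 : (fun t => Real.log t) =o[atTop] τ) : legConj τ 0 = 0 := by
  refine le_antisymm (legConj_le fun y hy => ?_) (legConj_nonneg hτ hn h3 le_rfl)
  have := phiF_nonneg hτ y
  simp only [phiF] at this
  linarith

lemma legConj_upper (hτ : IsWeightFun τ) (hn : IsNormalized τ)
    (h3 : (fun t => Real.log t) =o[atTop] τ) (h4 : ConvexOn ℝ univ (phiF τ))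
    {σ : ℝ} (hσ : gapF τ 0 ≤ σ) :
    legConj τ σ ≤ σ * (WF τ σ + 3) - phiF τ (WF τ σ + 1) := by
  set W := WF τ σ with hWdef
  have hW0 : 0 ≤ W := (WF_mem hτ hn h3 h4 hσ).1
  have ha : gapF τ W ≤ σ := (WF_mem hτ hn h3 h4 hσ).2
  have hb : σ ≤ gapF τ (W + 1) := (WF_lt hτ hn h3 h4 hσ (lt_add_one W)).le
  have hσ0 : 0 ≤ σ := le_trans (gapF_nonneg hτ 0) hσ
  have ha' : phiF τ (W+1) - phiF τ W ≤ σ := ha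
  have hb' : σ ≤ phiF τ (W+1+1) - phiF τ (W+1) := hb
  apply legConj_le
  intro y hy
  show σ * y - phiF τ y ≤ _
  rcases le_or_gt y W with hyW | hyW
  · have hc := C1 h4 hyW
    have h2 : gapF τ W * (W - y) ≤ σ * (W - y) :=
      mul_le_mul_of_nonneg_right ha (by linarith)
    nlinarith
  · rcases le_or_gt y (W + 2) with hy2 | hy2
    · have h1 : phiF τ W ≤ phiF τ y := phiF_mono hτ hyW.le
      have h2 : σ * y ≤ σ * (W + 2) := mul_le_mul_of_nonneg_left hy2 hσ0
      nlinarith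
    · have hc := C2 h4 (v := W) hy2.le
      have h2 : σ * (y - (W + 2)) ≤ gapF τ (W + 1) * (y - (W + 2)) :=
        mul_le_mul_of_nonneg_right hb (by linarith)
      have h3' : phiF τ (W + 1) ≤ phiF τ (W + 2) := phiF_mono hτ (by linarith)
      have he : (W + 1 + 1 : ℝ) = W + 2 := by ring
      rw [he] at hb'
      have hgap2 : gapF τ (W+1) * (y - (W+2)) = (phiF τ (W+2) - phiF τ (W+1)) * (y - (W+2)) := by
        unfold gapF; ring_nf
      nlinarith


lemma Tmat_pos (τ : ℝ → ℝ) (x : ℝ) (p : ℕ) : 0 < Tmat τ x p := Real.exp_pos _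

lemma ThatSeq_pos (τ : ℝ → ℝ) (x : ℝ) (p : ℕ) : 0 < ThatSeq τ x p :=
  mul_pos (by exact_mod_cast p.factorial_pos) (Tmat_pos τ x p)

lemma Tmat_zero (hτ : IsWeightFun τ) (hn : IsNormalized τ)
    (h3 : (fun t => Real.log t) =o[atTop] τ) (x : ℝ) : Tmat τ x 0 = 1 := by
  unfold Tmat
  rw [Nat.cast_zero, mul_zero, legConj_zero hτ hn h3, mul_zero, Real.exp_zero]

lemma ThatSeq_zero (hτ : IsWeightFun τ) (hn : IsNormalized τ)
    (h3 : (fun t => Real.log t) =o[atTop] τ) (x : ℝ) : ThatSeq τ x 0 = 1 := by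
  unfold ThatSeq
  rw [Tmat_zero hτ hn h3 x]
  simp

lemma log_term_T {y v : ℝ} (hv : 0 < v) (q : ℕ) :
    Real.log (v ^ q / Tmat τ y q) = q * Real.log v - 1 / y * legConj τ (y * q) := by
  rw [Real.log_div (pow_ne_zero _ hv.ne') (Tmat_pos τ y q).ne', Real.log_pow]
  unfold Tmat
  rw [Real.log_exp]

lemma log_term_That {x t : ℝ} (ht : 0 < t) (q : ℕ) :
    Real.log (t ^ q / ThatSeq τ x q)
      = q * Real.log t - Real.log q.factorial - 1 / x * legConj τ (x * q) := by
  rw [Real.log_div (pow_ne_zero _ ht.ne') (ThatSeq_pos τ x q).ne', Real.log_pow]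
  unfold ThatSeq Tmat
  rw [Real.log_mul (by exact_mod_cast q.factorial_pos.ne') (Real.exp_pos _).ne', Real.log_exp]
  ring

lemma bddAbove_T (hτ : IsWeightFun τ) (h3 : (fun t => Real.log t) =o[atTop] τ)
    {y v : ℝ} (hy : 0 < y) (hv : 0 < v) :
    BddAbove (Set.range fun q : ℕ => Real.log (v ^ q / Tmat τ y q)) := by
  set m := max (Real.log v) 0 with hm
  refine ⟨1 / y * phiF τ m, ?_⟩
  rintro z ⟨q, rfl⟩
  simp only
  rw [log_term_T hv]
  have hm0 : 0 ≤ m := le_max_right _ _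
  have h1 : (q : ℝ) * Real.log v ≤ q * m :=
    mul_le_mul_of_nonneg_left (le_max_left _ _) (Nat.cast_nonneg q)
  have h2 : (y * q) * m - phiF τ m ≤ legConj τ (y * q) :=
    legConj_ge hτ h3 (by positivity) hm0
  have h3' := mul_le_mul_of_nonneg_left h2 (by positivity : (0:ℝ) ≤ 1/y)
  have he : 1/y * ((y * q) * m - phiF τ m) = q * m - 1/y * phiF τ m := by
    field_simp
  linarith

lemma bddAbove_That (hτ : IsWeightFun τ) (h3 : (fun t => Real.log t) =o[atTop] τ)
    {x t : ℝ} (hx : 0 < x) (ht : 0 < t) :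
    BddAbove (Set.range fun q : ℕ => Real.log (t ^ q / ThatSeq τ x q)) := by
  set m := max (Real.log t) 0 with hm
  refine ⟨1 / x * phiF τ m, ?_⟩
  rintro z ⟨q, rfl⟩
  simp only
  rw [log_term_That ht]
  have hm0 : 0 ≤ m := le_max_right _ _
  have h1 : (q : ℝ) * Real.log t ≤ q * m :=
    mul_le_mul_of_nonneg_left (le_max_left _ _) (Nat.cast_nonneg q)
  have hfact : 0 ≤ Real.log q.factorial :=
    Real.log_nonneg (by exact_mod_cast q.factorial_pos)
  have h2 : (x * q) * m - phiF τ m ≤ legConj τ (x * q) :=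
    legConj_ge hτ h3 (by positivity) hm0
  have h3' := mul_le_mul_of_nonneg_left h2 (by positivity : (0:ℝ) ≤ 1/x)
  have he : 1/x * ((x * q) * m - phiF τ m) = q * m - 1/x * phiF τ m := by
    field_simp
  linarith

lemma assocT_nonneg (hτ : IsWeightFun τ) (hn : IsNormalized τ)
    (h3 : (fun t => Real.log t) =o[atTop] τ) {y v : ℝ} (hy : 0 < y) (hv : 0 < v) :
    0 ≤ assocFun (Tmat τ y) v := by
  rw [assocFun, if_neg (not_le.2 hv)]
  have h := le_csSup (bddAbove_T hτ h3 hy hv) (Set.mem_range_self 0)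
  rw [pow_zero, Tmat_zero hτ hn h3 y] at h
  simpa using h

lemma assocThat_nonneg (hτ : IsWeightFun τ) (hn : IsNormalized τ)
    (h3 : (fun t => Real.log t) =o[atTop] τ) {x t : ℝ} (hx : 0 < x) (ht : 0 < t) :
    0 ≤ assocFun (ThatSeq τ x) t := by
  rw [assocFun, if_neg (not_le.2 ht)]
  have h := le_csSup (bddAbove_That hτ h3 hx ht) (Set.mem_range_self 0)
  rw [pow_zero, ThatSeq_zero hτ hn h3 x] at h
  simpa using h

lemma assocT_le (hτ : IsWeightFun τ) (h3 : (fun t => Real.log t) =o[atTop] τ)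
    {y v : ℝ} (hy : 0 < y) (hv : 1 ≤ v) :
    assocFun (Tmat τ y) v ≤ 1 / y * phiF τ (Real.log v) := by
  rw [assocFun, if_neg (not_le.2 (by linarith : (0:ℝ) < v))]
  refine csSup_le (Set.range_nonempty _) ?_
  rintro z ⟨q, rfl⟩
  simp only
  rw [log_term_T (by linarith : (0:ℝ) < v)]
  have hlv : 0 ≤ Real.log v := Real.log_nonneg hv
  have h2 : (y * q) * Real.log v - phiF τ (Real.log v) ≤ legConj τ (y * q) := by
    have := legConj_ge hτ h3 (σ := y * q) (u := Real.log v) (by positivity) hlv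
    simpa [phiF] using this
  have h3' := mul_le_mul_of_nonneg_left h2 (by positivity : (0:ℝ) ≤ 1/y)
  have he : 1/y * ((y * q) * Real.log v - phiF τ (Real.log v))
      = q * Real.log v - 1/y * phiF τ (Real.log v) := by field_simp
  linarith

lemma assocT_ge_log (hτ : IsWeightFun τ) (h3 : (fun t => Real.log t) =o[atTop] τ)
    {y v : ℝ} (hy : 0 < y) (hv : 0 < v) :
    Real.log v - 1 / y * legConj τ y ≤ assocFun (Tmat τ y) v := by
  rw [assocFun, if_neg (not_le.2 hv)]
  have h := le_csSup (bddAbove_T hτ h3 hy hv) (Set.mem_range_self 1)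
  rw [log_term_T hv] at h
  simpa using h


lemma log_le_div_e {z : ℝ} (hz : 0 < z) : Real.log z ≤ z / Real.exp 1 := by
  have h := Real.log_le_sub_one_of_pos (show 0 < z / Real.exp 1 by positivity)
  rw [Real.log_div hz.ne' (Real.exp_pos 1).ne', Real.log_exp] at h
  linarith

lemma assocT_ge_term (hτ : IsWeightFun τ) (h3 : (fun t => Real.log t) =o[atTop] τ)
    {y v : ℝ} (hy : 0 < y) (hv : 0 < v) (q : ℕ) :
    (q:ℝ) * Real.log v - 1 / y * legConj τ (y * q) ≤ assocFun (Tmat τ y) v := by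
  rw [assocFun, if_neg (not_le.2 hv)]
  have h : Real.log (v ^ q / Tmat τ y q)
      ≤ sSup (Set.range fun q : ℕ => Real.log (v ^ q / Tmat τ y q)) :=
    le_csSup (bddAbove_T hτ h3 hy hv) (Set.mem_range_self q)
  rwa [log_term_T hv] at h

lemma assocThat_ge_term (hτ : IsWeightFun τ) (h3 : (fun t => Real.log t) =o[atTop] τ)
    {x t : ℝ} (hx : 0 < x) (ht : 0 < t) (p : ℕ) :
    (p:ℝ) * Real.log t - Real.log p.factorial - 1 / x * legConj τ (x * p)
      ≤ assocFun (ThatSeq τ x) t := by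
  rw [assocFun, if_neg (not_le.2 ht)]
  have h : Real.log (t ^ p / ThatSeq τ x p)
      ≤ sSup (Set.range fun p : ℕ => Real.log (t ^ p / ThatSeq τ x p)) :=
    le_csSup (bddAbove_That hτ h3 hx ht) (Set.mem_range_self p)
  rwa [log_term_That ht] at h

lemma propI (hτ : IsWeightFun τ) (hn : IsNormalized τ)
    (h3 : (fun t => Real.log t) =o[atTop] τ) (h4 : ConvexOn ℝ univ (phiF τ))
    {x y : ℝ} (hx : 0 < x) (hy : 0 < y) :
    assocFun (ThatSeq τ x) =O[atTop] lowerLeg (fun s => assocFun (Tmat τ y) (1 / s)) := by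
  set A := max (2 * y / x) 1 with hA
  have hA1 : (1:ℝ) ≤ A := le_max_right _ _
  have hA0 : (0:ℝ) < A := lt_of_lt_of_le one_pos hA1
  set cy := 1 / y * legConj τ y with hcy
  have hcy0 : 0 ≤ cy := mul_nonneg (by positivity) (legConj_nonneg hτ hn h3 hy.le)
  -- key1
  have key1 : ∀ t v : ℝ, 1 ≤ t → Real.exp 1 ≤ v →
      assocFun (ThatSeq τ x) t ≤ A * (assocFun (Tmat τ y) v + t / v) + y / x * cy := by
    intro t v ht hv
    have ht0 : (0:ℝ) < t := lt_of_lt_of_le one_pos ht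
    have hv1 : (1:ℝ) ≤ v := le_trans (Real.one_le_exp zero_le_one) hv
    have hv0 : (0:ℝ) < v := lt_of_lt_of_le one_pos hv1
    have hωv : 0 ≤ assocFun (Tmat τ y) v := assocT_nonneg hτ hn h3 hy hv0
    have htv : 0 ≤ t / v := by positivity
    rw [assocFun, if_neg (not_le.2 ht0)]
    refine csSup_le (Set.range_nonempty _) ?_
    rintro z ⟨p, rfl⟩
    simp only
    rw [log_term_That ht0]
    rcases Nat.eq_zero_or_pos p with rfl | hp
    · simp only [Nat.cast_zero, zero_mul, Nat.factorial_zero, Nat.cast_one, Real.log_one,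
        mul_zero, legConj_zero hτ hn h3]
      have : 0 ≤ A * (assocFun (Tmat τ y) v + t / v) :=
        mul_nonneg hA0.le (by linarith)
      have : 0 ≤ y / x * cy := mul_nonneg (by positivity) hcy0
      linarith
    · have hp0 : (0:ℝ) < p := by exact_mod_cast hp
      -- (i1)
      have hfac : (p:ℝ) ^ p / p.factorial ≤ Real.exp p :=
        Real.pow_div_factorial_le_exp (p:ℝ) (Nat.cast_nonneg p) p
      have hi1 : (p:ℝ) * Real.log p - Real.log p.factorial ≤ p := by
        have hl := Real.log_le_log (by positivity) hfac
        rwa [Real.log_div (by positivity) (by exact_mod_cast p.factorial_pos.ne'),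
          Real.log_pow, Real.log_exp] at hl
      -- (i2)
      have hz0 : (0:ℝ) < Real.exp 1 * t / (p * v) := by positivity
      have hi2 : (p:ℝ) * Real.log (Real.exp 1 * t / (p * v)) ≤ t / v := by
        have h := mul_le_mul_of_nonneg_left (log_le_div_e hz0) (Nat.cast_nonneg p)
        have he : (p:ℝ) * (Real.exp 1 * t / (p * v) / Real.exp 1) = t / v := by
          field_simp
        linarith
      -- identity
      have hid : Real.log t - Real.log p + 1 = Real.log v + Real.log (Real.exp 1 * t / (p * v)) := by
        rw [Real.log_div (by positivity) (by positivity), Real.log_mul (Real.exp_pos 1).ne'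
          ht0.ne', Real.log_mul hp0.ne' hv0.ne', Real.log_exp]
        ring
      have hidp : (p:ℝ) * (Real.log t - Real.log p + 1)
          = p * Real.log v + p * Real.log (Real.exp 1 * t / (p * v)) := by
        rw [hid]; ring
      -- (i3)
      set q := ⌊x * p / y⌋₊ with hqdef
      have hq1 : y * (q:ℝ) ≤ x * p := by
        have h := Nat.floor_le (show (0:ℝ) ≤ x * p / y by positivity)
        calc y * (q:ℝ) ≤ y * (x * p / y) := mul_le_mul_of_nonneg_left h hy.le
        _ = x * p := by field_simp
      have hq2 : x * p / y - 1 ≤ (q:ℝ) := by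
        have := Nat.lt_floor_add_one (x * p / y)
        linarith
      have hlv : 0 ≤ Real.log v := Real.log_nonneg hv1
      have hmono : legConj τ (y * q) ≤ legConj τ (x * p) :=
        legConj_mono hτ h3 (by positivity) hq1
      have hterm_q := assocT_ge_term hτ h3 hy hv0 q
      have hc1 : (x * p / y - 1) * Real.log v - 1 / y * legConj τ (x * p)
          ≤ assocFun (Tmat τ y) v := by
        have h1 := mul_le_mul_of_nonneg_right hq2 hlv
        have h2 := mul_le_mul_of_nonneg_left hmono (by positivity : (0:ℝ) ≤ 1 / y)
        linarith
      have hkey : (p:ℝ) * Real.log v - 1 / x * legConj τ (x * p)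
          ≤ y / x * (assocFun (Tmat τ y) v + Real.log v) := by
        have h1 := mul_le_mul_of_nonneg_left hc1 (le_of_lt (by positivity : (0:ℝ) < y / x))
        have he : y / x * ((x * p / y - 1) * Real.log v - 1 / y * legConj τ (x * p))
            = p * Real.log v - y / x * Real.log v - 1 / x * legConj τ (x * p) := by
          field_simp
        rw [he] at h1
        have he2 : y / x * (assocFun (Tmat τ y) v + Real.log v)
            = y / x * assocFun (Tmat τ y) v + y / x * Real.log v := by ring
        rw [he2]
        linarith
      -- log v bound
      have hlogv : Real.log v ≤ assocFun (Tmat τ y) v + cy := by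
        have := assocT_ge_log hτ h3 hy hv0
        rw [hcy]; linarith
      -- assemble
      have hyx0 : (0:ℝ) ≤ y / x := by positivity
      have e1 : (p:ℝ) * (Real.log t - Real.log (p:ℝ) + 1)
          = p * Real.log t - p * Real.log (p:ℝ) + p := by ring
      have h5 : (p:ℝ) * Real.log t - Real.log p.factorial ≤ p * Real.log v + t / v := by
        linarith [hidp, hi1, hi2, e1]
      have h6 : y / x * (assocFun (Tmat τ y) v + Real.log v)
          ≤ y / x * (2 * assocFun (Tmat τ y) v + cy) :=
        mul_le_mul_of_nonneg_left (by linarith) hyx0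
      have hstep : (p:ℝ) * Real.log t - Real.log p.factorial - 1 / x * legConj τ (x * p)
          ≤ y / x * (2 * assocFun (Tmat τ y) v + cy) + t / v := by
        linarith [hkey, h5, h6]
      have hfin : y / x * (2 * assocFun (Tmat τ y) v + cy) + t / v
          ≤ A * (assocFun (Tmat τ y) v + t / v) + y / x * cy := by
        have h1 : 2 * y / x * assocFun (Tmat τ y) v ≤ A * assocFun (Tmat τ y) v :=
          mul_le_mul_of_nonneg_right (le_max_left _ _) hωv
        have h2 : 1 * (t / v) ≤ A * (t / v) := mul_le_mul_of_nonneg_right hA1 htv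
        have e2 : y / x * (2 * assocFun (Tmat τ y) v + cy)
            = 2 * y / x * assocFun (Tmat τ y) v + y / x * cy := by ring
        have e3 : A * (assocFun (Tmat τ y) v + t / v) = A * assocFun (Tmat τ y) v + A * (t / v) := by
          ring
        linarith
      linarith
  -- key2 : arbitrary v > 0
  set ωe := assocFun (Tmat τ y) (Real.exp 1) with hωe
  have hωe0 : 0 ≤ ωe := assocT_nonneg hτ hn h3 hy (Real.exp_pos 1)
  set B₂ := A * ωe + y / x * cy with hB₂
  have hB₂0 : 0 ≤ B₂ := by positivity
  have key2 : ∀ t v : ℝ, 1 ≤ t → 0 < v →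
      assocFun (ThatSeq τ x) t ≤ A * (assocFun (Tmat τ y) v + t / v) + B₂ := by
    intro t v ht hv0
    have ht0 : (0:ℝ) < t := lt_of_lt_of_le one_pos ht
    rcases le_or_gt (Real.exp 1) v with h | h
    · have := key1 t v ht h
      have hωv : 0 ≤ assocFun (Tmat τ y) v := assocT_nonneg hτ hn h3 hy hv0
      have : A * ωe ≥ 0 := by positivity
      linarith [key1 t v ht h, mul_nonneg hA0.le hωe0]
    · have hk := key1 t (Real.exp 1) ht le_rfl
      have hdiv : t / Real.exp 1 ≤ t / v := by
        apply div_le_div_of_nonneg_left ht0.le hv0 h.le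
      have hωv : 0 ≤ assocFun (Tmat τ y) v := assocT_nonneg hτ hn h3 hy hv0
      have e1 : A * (ωe + t / Real.exp 1) = A * ωe + A * (t / Real.exp 1) := by ring
      have e2 : A * (assocFun (Tmat τ y) v + t / v) + B₂
          = A * assocFun (Tmat τ y) v + A * (t / v) + A * ωe + y / x * cy := by
        rw [hB₂]; ring
      have h1 : A * (t / Real.exp 1) ≤ A * (t / v) := mul_le_mul_of_nonneg_left hdiv hA0.le
      have h2 : 0 ≤ A * assocFun (Tmat τ y) v := mul_nonneg hA0.le hωv
      linarith
  -- key3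
  have key3 : ∀ t : ℝ, 1 ≤ t →
      assocFun (ThatSeq τ x) t ≤ A * lowerLeg (fun s => assocFun (Tmat τ y) (1 / s)) t + B₂ := by
    intro t ht
    have ht0 : (0:ℝ) < t := lt_of_lt_of_le one_pos ht
    have hle : (assocFun (ThatSeq τ x) t - B₂) / A
        ≤ lowerLeg (fun s => assocFun (Tmat τ y) (1 / s)) t := by
      rw [lowerLeg]
      refine le_csInf ⟨_, ⟨1, mem_Ioi.2 one_pos, rfl⟩⟩ ?_
      rintro b ⟨s, hs, rfl⟩
      have hs0 : (0:ℝ) < s := hs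
      have hk := key2 t (1 / s) ht (by positivity)
      have he : t / (1 / s) = t * s := by field_simp
      rw [he] at hk
      rw [div_le_iff₀ hA0]
      simp only
      nlinarith [hk]
    rw [div_le_iff₀ hA0] at hle
    linarith [hle]
  -- divergence of the lower conjugate
  have key4 : ∀ R : ℝ, 0 ≤ R → ∀ᶠ t in atTop,
      R ≤ lowerLeg (fun s => assocFun (Tmat τ y) (1 / s)) t := by
    intro R hR
    set V := Real.exp (R + cy) with hV
    have hV0 : (0:ℝ) < V := Real.exp_pos _
    filter_upwards [eventually_ge_atTop (R * V), eventually_gt_atTop (0:ℝ)] with t htR ht0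
    rw [lowerLeg]
    refine le_csInf ⟨_, ⟨1, mem_Ioi.2 one_pos, rfl⟩⟩ ?_
    rintro b ⟨s, hs, rfl⟩
    have hs0 : (0:ℝ) < s := hs
    simp only
    rcases le_or_gt V (1 / s) with h | h
    · have hlog : R + cy ≤ Real.log (1 / s) := by
        have := Real.log_le_log hV0 h
        rwa [hV, Real.log_exp] at this
      have hω := assocT_ge_log hτ h3 hy (show (0:ℝ) < 1/s by positivity)
      have hts : 0 ≤ t * s := by positivity
      rw [← hcy] at hω
      linarith
    · have hVs : 1 < V * s := by
        have := (div_lt_iff₀ hs0).1 h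
        linarith [this]
      have hts : R ≤ t * s := by
        have h1 : R * V * s ≤ t * s := mul_le_mul_of_nonneg_right htR hs0.le
        have h2 : R * 1 ≤ R * (V * s) := mul_le_mul_of_nonneg_left hVs.le hR
        have e : R * V * s = R * (V * s) := by ring
        linarith
      have hω := assocT_nonneg hτ hn h3 hy (show (0:ℝ) < 1/s by positivity)
      linarith
  -- conclusion
  refine Asymptotics.IsBigO.of_bound (A + 1) ?_
  filter_upwards [key4 (max B₂ 0) (le_max_right _ _), eventually_ge_atTop (1:ℝ)] with t hG ht1
  have ht0 : (0:ℝ) < t := lt_of_lt_of_le one_pos ht1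
  have hGB : B₂ ≤ lowerLeg (fun s => assocFun (Tmat τ y) (1 / s)) t :=
    le_trans (le_max_left _ _) hG
  have hG0 : 0 ≤ lowerLeg (fun s => assocFun (Tmat τ y) (1 / s)) t :=
    le_trans (le_max_right _ _) hG
  have hω0 : 0 ≤ assocFun (ThatSeq τ x) t := assocThat_nonneg hτ hn h3 hx ht0
  rw [Real.norm_eq_abs, Real.norm_eq_abs, abs_of_nonneg hω0, abs_of_nonneg hG0]
  have := key3 t ht1
  nlinarith


lemma lowerLeg_nonneg (hτ : IsWeightFun τ) (hn : IsNormalized τ)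
    (h3 : (fun t => Real.log t) =o[atTop] τ) {y t : ℝ} (hy : 0 < y) (ht : 0 < t) :
    0 ≤ lowerLeg (fun s => assocFun (Tmat τ y) (1 / s)) t := by
  rw [lowerLeg]
  refine le_csInf ⟨_, ⟨1, mem_Ioi.2 one_pos, rfl⟩⟩ ?_
  rintro b ⟨s, hs, rfl⟩
  have hs0 : (0:ℝ) < s := hs
  have h1 := assocT_nonneg hτ hn h3 hy (show (0:ℝ) < 1/s by positivity)
  have h2 : 0 ≤ t * s := by positivity
  simp only
  linarith

lemma lowerLeg_bddBelow (hτ : IsWeightFun τ) (hn : IsNormalized τ)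
    (h3 : (fun t => Real.log t) =o[atTop] τ) {y t : ℝ} (hy : 0 < y) (ht : 0 < t) :
    BddBelow ((fun s => assocFun (Tmat τ y) (1 / s) + t * s) '' Ioi 0) := by
  refine ⟨0, ?_⟩
  rintro b ⟨s, hs, rfl⟩
  have hs0 : (0:ℝ) < s := hs
  have h1 := assocT_nonneg hτ hn h3 hy (show (0:ℝ) < 1/s by positivity)
  have h2 : 0 ≤ t * s := by positivity
  simp only
  linarith

lemma propII (hτ : IsWeightFun τ) (hn : IsNormalized τ)
    (h3 : (fun t => Real.log t) =o[atTop] τ) (h4 : ConvexOn ℝ univ (phiF τ))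
    {x y : ℝ} (hx : 0 < x) (hy : 0 < y) :
    lowerLeg (fun s => assocFun (Tmat τ y) (1 / s)) =O[atTop] assocFun (ThatSeq τ x) := by
  set p₀ : ℕ := ⌈gapF τ 0 / x⌉₊ + 1 with hp₀def
  have hp₀1 : 1 ≤ p₀ := Nat.le_add_left 1 _
  have hxp₀ : gapF τ 0 ≤ x * p₀ := by
    have h1 : gapF τ 0 / x ≤ (⌈gapF τ 0 / x⌉₊ : ℝ) := Nat.le_ceil _
    have h2 : ((⌈gapF τ 0 / x⌉₊ : ℕ) : ℝ) ≤ (p₀ : ℝ) := by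
      exact_mod_cast Nat.le_succ ⌈gapF τ 0 / x⌉₊
    calc gapF τ 0 = x * (gapF τ 0 / x) := by field_simp
    _ ≤ x * p₀ := mul_le_mul_of_nonneg_left (h1.trans h2) hx.le
  have hxp : ∀ p : ℕ, p₀ ≤ p → gapF τ 0 ≤ x * p := by
    intro p hp
    refine hxp₀.trans (mul_le_mul_of_nonneg_left ?_ hx.le)
    exact_mod_cast hp
  set t₀ := Real.exp (Real.log p₀ + WF τ (x * p₀) + 4 + 1/x) with ht₀def
  set C := 3 * x / y + 2 * x * Real.exp (4 + 1/x) with hCdef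
  refine Asymptotics.IsBigO.of_bound C ?_
  filter_upwards [eventually_ge_atTop t₀, eventually_ge_atTop (2:ℝ)] with t htt₀ ht2
  have ht0 : (0:ℝ) < t := by linarith
  have ht1 : (1:ℝ) ≤ t := by linarith
  set S : Set ℕ := {p : ℕ | p₀ ≤ p ∧ Real.log p + WF τ (x * p) + 4 + 1/x ≤ Real.log t}
    with hSdef
  have hSne : p₀ ∈ S := by
    refine ⟨le_rfl, ?_⟩
    have h1 : Real.log t₀ ≤ Real.log t := Real.log_le_log (Real.exp_pos _) htt₀
    rw [ht₀def, Real.log_exp] at h1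
    exact h1
  have hSfin : S.Finite := by
    refine Set.Finite.subset (Set.finite_Iic ⌈t⌉₊) ?_
    intro p hp
    have hW := (WF_mem hτ hn h3 h4 (hxp p hp.1)).1
    have hx4 : (0:ℝ) ≤ 4 + 1/x := by positivity
    have h1 : Real.log p ≤ Real.log t := by
      have := hp.2
      linarith
    have hpt : (p:ℝ) ≤ t := by
      by_contra hgt
      push_neg at hgt
      have := Real.log_lt_log ht0 hgt
      linarith
    have : (p:ℝ) ≤ (⌈t⌉₊ : ℝ) := hpt.trans (Nat.le_ceil t)
    exact mem_Iic.2 (by exact_mod_cast this)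
  obtain ⟨p, hpS, hpmax⟩ := hSfin.exists_maximal ⟨p₀, hSne⟩
  have hmaxS : p + 1 ∉ S := by
    intro hmem
    have h := hpmax hmem (Nat.le_succ p)
    omega
  set W := WF τ (x * p) with hWdef
  have hp₀p : p₀ ≤ p := hpS.1
  have hp1 : 1 ≤ p := le_trans hp₀1 hp₀p
  have hp1R : (1:ℝ) ≤ (p:ℝ) := by exact_mod_cast hp1
  have hp0R : (0:ℝ) < (p:ℝ) := by linarith
  have hgp : gapF τ 0 ≤ x * p := hxp p hp₀p
  have hgp1 : gapF τ 0 ≤ x * ((p:ℝ) + 1) := by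
    have := hxp (p + 1) (by omega)
    push_cast at this
    exact this
  have hW0 : 0 ≤ W := (WF_mem hτ hn h3 h4 hgp).1
  have hF1 : Real.log p + W + 4 + 1/x ≤ Real.log t := hpS.2
  have hF2 : Real.log t < Real.log ((p:ℝ) + 1) + WF τ (x * ((p:ℝ) + 1)) + 4 + 1/x := by
    by_contra hc
    push_neg at hc
    refine hmaxS ⟨by omega, ?_⟩
    push_cast
    exact hc
  set L := Real.log t - Real.log ((p:ℝ) + 1) - 4 - 1/x with hLdef
  set w := max (W + 1) L with hwdef
  set E := max 0 (L - (W + 1)) with hEdef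
  have hE0 : 0 ≤ E := le_max_left _ _
  have hw1 : W + 1 ≤ w := le_max_left _ _
  have hw0 : 0 ≤ w := by linarith
  -- f1
  have hf1 : t * Real.exp (-w) ≤ ((p:ℝ) + 1) * Real.exp (4 + 1/x) := by
    have h1 : t * Real.exp (-w) ≤ t * Real.exp (-L) :=
      mul_le_mul_of_nonneg_left (Real.exp_le_exp.2 (neg_le_neg (le_max_right _ _))) ht0.le
    have h2 : t * Real.exp (-L) = ((p:ℝ) + 1) * Real.exp (4 + 1/x) := by
      have eL : -L = (Real.log ((p:ℝ) + 1) + (4 + 1/x)) - Real.log t := by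
        rw [hLdef]; ring
      rw [eL, Real.exp_sub, Real.exp_add, Real.exp_log (by positivity : (0:ℝ) < (p:ℝ) + 1),
        Real.exp_log ht0]
      field_simp
    linarith
  -- f2
  have hf2 : phiF τ w ≤ phiF τ (W + 1) + x * ((p:ℝ) + 1) * E := by
    rcases le_or_gt L (W + 1) with h | h
    · have hwW : w = W + 1 := max_eq_left h
      have hEz : E = 0 := max_eq_left (by linarith)
      rw [hwW, hEz, mul_zero, add_zero]
    · have hwL : w = L := max_eq_right h.le
      have hEL : E = L - (W + 1) := max_eq_right (by linarith)
      have hc := C1 h4 h.le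
      have hLW' : L < WF τ (x * ((p:ℝ) + 1)) := by
        rw [hLdef]
        linarith
      have hgL : gapF τ L ≤ x * ((p:ℝ) + 1) := by
        have hm := gapF_mono h4 hLW'.le
        have h2 := (WF_mem hτ hn h3 h4 hgp1).2
        linarith
      have hmul : gapF τ L * (L - (W + 1)) ≤ x * ((p:ℝ) + 1) * (L - (W + 1)) :=
        mul_le_mul_of_nonneg_right hgL (by linarith)
      rw [hwL, hEL]
      linarith
  -- f3 : lower bound for x * ω
  have hfact : Real.log (p.factorial : ℝ) ≤ (p:ℝ) * Real.log p := by
    have h := Nat.factorial_le_pow p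
    have hcast : ((p.factorial : ℕ) : ℝ) ≤ (((p ^ p : ℕ)) : ℝ) := by exact_mod_cast h
    have hl := Real.log_le_log (by exact_mod_cast p.factorial_pos) hcast
    rwa [Nat.cast_pow, Real.log_pow] at hl
  have hL2 := legConj_upper hτ hn h3 h4 hgp
  rw [← hWdef] at hL2
  set ω := assocFun (ThatSeq τ x) t with hωdef
  have hterm := assocThat_ge_term hτ h3 hx ht0 p
  have hd1 : 1 + 1/x ≤ Real.log t - Real.log p - W - 3 := by linarith
  have hd2 : E ≤ Real.log t - Real.log p - W - 3 := by
    rcases le_or_gt (L - (W + 1)) 0 with h | h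
    · have : E = 0 := max_eq_left h
      rw [this]
      have : (0:ℝ) < 1 + 1/x := by positivity
      linarith
    · have hEL : E = L - (W + 1) := max_eq_right h.le
      have hlog : Real.log p ≤ Real.log ((p:ℝ) + 1) :=
        Real.log_le_log hp0R (by linarith)
      rw [hEL, hLdef]
      have hx0 : 0 < 1/x := by positivity
      linarith
  have hxterm : x * (p:ℝ) * (Real.log t - Real.log p - W - 3) + phiF τ (W + 1)
      ≤ x * ω := by
    have h1 := mul_le_mul_of_nonneg_left hfact hx.le
    have hωt := mul_le_mul_of_nonneg_left hterm hx.le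
    have e : x * ((p:ℝ) * Real.log t - Real.log p.factorial - 1/x * legConj τ (x * p))
        = x * (p:ℝ) * Real.log t - x * Real.log p.factorial - legConj τ (x * p) := by
      field_simp
    rw [e] at hωt
    have e2 : x * (p:ℝ) * (Real.log t - Real.log p - W - 3)
        = x * (p:ℝ) * Real.log t - x * ((p:ℝ) * Real.log p) - x * (p:ℝ) * (W + 3) := by ring
    linarith [hL2]
  have hb1 : x * (p:ℝ) * (1 + 1/x) ≤ x * (p:ℝ) * (Real.log t - Real.log p - W - 3) :=
    mul_le_mul_of_nonneg_left hd1 (by positivity)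
  have eb1 : x * (p:ℝ) * (1 + 1/x) = x * (p:ℝ) + (p:ℝ) := by field_simp
  have hb2 : x * (p:ℝ) * E ≤ x * (p:ℝ) * (Real.log t - Real.log p - W - 3) :=
    mul_le_mul_of_nonneg_left hd2 (by positivity)
  have hxp0 : (0:ℝ) ≤ x * (p:ℝ) := by positivity
  have hφ0 : 0 ≤ phiF τ (W + 1) := phiF_nonneg hτ _
  have hω1 : (p:ℝ) + phiF τ (W + 1) ≤ x * ω := by linarith
  have hω2 : x * (p:ℝ) * E + phiF τ (W + 1) ≤ x * ω := by linarith
  have hφω : phiF τ (W + 1) ≤ x * ω := by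
    have := mul_nonneg hxp0 hE0
    linarith
  have hpω : (p:ℝ) ≤ x * ω := by linarith
  have hxpEω : x * (p:ℝ) * E ≤ x * ω := by linarith
  have hω0 : 0 ≤ ω := by
    by_contra hneg
    push_neg at hneg
    have : x * ω < 0 := mul_neg_of_pos_of_neg hx hneg
    linarith
  -- f5, f6
  have hf5 : lowerLeg (fun s => assocFun (Tmat τ y) (1 / s)) t
      ≤ assocFun (Tmat τ y) (Real.exp w) + t * Real.exp (-w) := by
    rw [lowerLeg]
    have hmem : (fun s => assocFun (Tmat τ y) (1 / s) + t * s) (Real.exp (-w))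
        ∈ (fun s => assocFun (Tmat τ y) (1 / s) + t * s) '' Ioi 0 :=
      ⟨Real.exp (-w), mem_Ioi.2 (Real.exp_pos _), rfl⟩
    have h := csInf_le (lowerLeg_bddBelow hτ hn h3 hy ht0) hmem
    simp only at h
    rwa [one_div, ← Real.exp_neg, neg_neg] at h
  have hf6 : assocFun (Tmat τ y) (Real.exp w) ≤ 1/y * phiF τ w := by
    have h := assocT_le hτ h3 hy (Real.one_le_exp hw0)
    rwa [Real.log_exp] at h
  -- final chain
  have hEp : x * 1 * E ≤ x * (p:ℝ) * E := by
    apply mul_le_mul_of_nonneg_right _ hE0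
    exact mul_le_mul_of_nonneg_left hp1R hx.le
  have hchain : lowerLeg (fun s => assocFun (Tmat τ y) (1 / s)) t ≤ C * ω := by
    have h1 : 1/y * phiF τ w ≤ 1/y * (phiF τ (W + 1) + x * ((p:ℝ) + 1) * E) :=
      mul_le_mul_of_nonneg_left hf2 (by positivity)
    have e1 : x * ((p:ℝ) + 1) * E = x * (p:ℝ) * E + x * 1 * E := by ring
    have h2 : phiF τ (W + 1) + x * ((p:ℝ) + 1) * E ≤ 3 * (x * ω) := by
      rw [e1]
      linarith
    have h3' : 1/y * (phiF τ (W + 1) + x * ((p:ℝ) + 1) * E) ≤ 1/y * (3 * (x * ω)) :=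
      mul_le_mul_of_nonneg_left h2 (by positivity)
    have e2 : 1/y * (3 * (x * ω)) = 3 * x / y * ω := by field_simp
    have h4' : ((p:ℝ) + 1) * Real.exp (4 + 1/x) ≤ 2 * (x * ω) * Real.exp (4 + 1/x) := by
      apply mul_le_mul_of_nonneg_right _ (Real.exp_pos _).le
      linarith
    have e3 : 2 * (x * ω) * Real.exp (4 + 1/x) = 2 * x * Real.exp (4 + 1/x) * ω := by ring
    have e4 : C * ω = 3 * x / y * ω + 2 * x * Real.exp (4 + 1/x) * ω := by
      rw [hCdef]; ring
    linarith [hf5, hf6, h1, h3', e2, hf1, h4', e3, e4]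
  have hG0 := lowerLeg_nonneg hτ hn h3 hy ht0
  rw [Real.norm_eq_abs, Real.norm_eq_abs, abs_of_nonneg hG0, abs_of_nonneg hω0]
  exact hchain

end helpers

/-- For a normalized weight `τ` with `(ω₃)`, `(ω₄)` and `γ(τ) > 0`: for all
`x, y > 0` the functions `ω_{T̂^x}` and `(ω_{T^y}^ι)_⋆` are equivalent weight
functions; in particular all the `ω_{T̂^x}`, `x > 0`, are mutually equivalent. -/
theorem stmt12 (τ : ℝ → ℝ) (hτ : IsWeightFun τ) (hn : IsNormalized τ)
    (h3 : (fun t => Real.log t) =o[atTop] τ)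
    (h4 : ConvexOn ℝ univ (fun t => τ (Real.exp t)))
    (hγ : 0 < gammaIndex τ) :
    (∀ x : ℝ, 0 < x → ∀ y : ℝ, 0 < y →
        assocFun (ThatSeq τ x) =O[atTop]
            lowerLeg (fun s => assocFun (Tmat τ y) (1 / s)) ∧
          lowerLeg (fun s => assocFun (Tmat τ y) (1 / s)) =O[atTop]
            assocFun (ThatSeq τ x)) ∧
    (∀ x : ℝ, 0 < x → ∀ y : ℝ, 0 < y →
        assocFun (ThatSeq τ x) =O[atTop] assocFun (ThatSeq τ y)) := by
  have h4' : ConvexOn ℝ univ (phiF τ) := h4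
  constructor
  · intro x hx y hy
    exact ⟨propI hτ hn h3 h4' hx hy, propII hτ hn h3 h4' hx hy⟩
  · intro x hx y hy
    exact (propI hτ hn h3 h4' hx hy).trans (propII hτ hn h3 h4' hy hy)
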